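/- The Beta calibration map g(p) = 1/(1 + exp(-c)·(1-p)^b/p^a) is monotonically nondecreasing on (0,1) whenever a, b ≥ 0, and strictly increasing when a + b > 0. -/
import Mathlib


theorem beta_calibration_monotone
    (a b c : ℝ) (ha : 0 ≤ a) (hb : 0 ≤ b) :
    MonotoneOn (fun p : ℝ => 1 / (1 + Real.exp (-c) * ((1 - p) ^ b / p ^ a)))
        (Set.Ioo (0 : ℝ) 1) ∧
      (0 < a + b →
        StrictMonoOn
          (fun p : ℝ => 1 / (1 + Real.exp (-c) * ((1 - p) ^ b / p ^ a)))
          (Set.Ioo (0 : ℝ) 1)) := by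
  have hE : 0 < Real.exp (-c) := Real.exp_pos _
  have hfpos : ∀ p ∈ Set.Ioo (0:ℝ) 1, 0 < (1 - p) ^ b / p ^ a := by
    intro p hp
    exact div_pos (Real.rpow_pos_of_pos (by linarith [hp.2]) _)
      (Real.rpow_pos_of_pos hp.1 _)
  have hden : ∀ p ∈ Set.Ioo (0:ℝ) 1,
      0 < 1 + Real.exp (-c) * ((1 - p) ^ b / p ^ a) := by
    intro p hp
    have := hfpos p hp
    nlinarith
  constructor
  · intro x hx y hy hxy
    have hfle : (1 - y) ^ b / y ^ a ≤ (1 - x) ^ b / x ^ a := by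
      have h1 : (1 - y) ^ b ≤ (1 - x) ^ b :=
        Real.rpow_le_rpow (by linarith [hy.2]) (by linarith) hb
      have h2 : x ^ a ≤ y ^ a :=
        Real.rpow_le_rpow (le_of_lt hx.1) hxy ha
      exact div_le_div₀ (le_of_lt (Real.rpow_pos_of_pos (by linarith [hx.2]) _))
        h1 (Real.rpow_pos_of_pos hx.1 _) h2
    simp only
    apply one_div_le_one_div_of_le (hden y hy)
    nlinarith
  · intro hab x hx y hy hxy
    have hflt : (1 - y) ^ b / y ^ a < (1 - x) ^ b / x ^ a := by
      have hab' : 0 < a ∨ 0 < b := by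
        rcases ha.lt_or_eq with h | h
        · exact Or.inl h
        rcases hb.lt_or_eq with h' | h'
        · exact Or.inr h'
        linarith
      rcases hab' with hA | hB
      · have h2 : x ^ a < y ^ a :=
          Real.rpow_lt_rpow (le_of_lt hx.1) hxy hA
        have h1 : (1 - y) ^ b ≤ (1 - x) ^ b :=
          Real.rpow_le_rpow (by linarith [hy.2]) (by linarith) hb
        calc (1 - y) ^ b / y ^ a < (1 - y) ^ b / x ^ a :=
              div_lt_div_of_pos_left (Real.rpow_pos_of_pos (by linarith [hy.2]) _)
                (Real.rpow_pos_of_pos hx.1 _) h2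
          _ ≤ (1 - x) ^ b / x ^ a :=
              by
                have := Real.rpow_pos_of_pos hx.1 a
                gcongr
      · have h1 : (1 - y) ^ b < (1 - x) ^ b :=
          Real.rpow_lt_rpow (by linarith [hy.2]) (by linarith) hB
        have h2 : x ^ a ≤ y ^ a :=
          Real.rpow_le_rpow (le_of_lt hx.1) (le_of_lt hxy) ha
        calc (1 - y) ^ b / y ^ a < (1 - x) ^ b / y ^ a :=
              div_lt_div_of_pos_right h1 (Real.rpow_pos_of_pos hy.1 _)
          _ ≤ (1 - x) ^ b / x ^ a :=
              by
                have := Real.rpow_pos_of_pos (show (0:ℝ) < 1 - x by linarith [hx.2]) b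
                have := Real.rpow_pos_of_pos hx.1 a
                gcongr
    simp only
    apply one_div_lt_one_div_of_lt (hden y hy)
    nlinarith
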